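/- arXiv:1911.04245 — 4 statements merged into one kernel-verified Lean document; each statement's English description precedes it below -/
import Mathlib

section
/- For permutations σ, τ in S_n and any positive integer k, the difference of normalized fixed-point counts satisfies |#fix(σ^k) − #fix(τ^k)|/n ≤ k · d_H(σ, τ). -/
open Finset

private lemma diff_pow_card_le (n : ℕ) (σ τ : Equiv.Perm (Fin n)) (k : ℕ) :
    (univ.filter fun x => (σ ^ k) x ≠ (τ ^ k) x).card ≤
      k * (univ.filter fun x => σ x ≠ τ x).card := by
  induction k with
  | zero => simp
  | succ k ih =>
    have hsub : (univ.filter fun x => (σ ^ (k+1)) x ≠ (τ ^ (k+1)) x) ⊆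
        (univ.filter fun x => (σ ^ k) x ≠ (τ ^ k) x) ∪
          ((univ.filter fun x => σ x ≠ τ x).image fun y => (σ ^ k)⁻¹ y) := by
      intro x hx
      simp only [mem_filter, mem_univ, true_and, mem_union, mem_image] at hx ⊢
      by_cases h : (σ ^ k) x = (τ ^ k) x
      · right
        refine ⟨(σ ^ k) x, ?_, by simp⟩
        intro hc
        apply hx
        rw [pow_succ', pow_succ', Equiv.Perm.mul_apply, Equiv.Perm.mul_apply, hc, h]
      · left; exact h
    calc (univ.filter fun x => (σ ^ (k+1)) x ≠ (τ ^ (k+1)) x).card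
        ≤ _ := card_le_card hsub
      _ ≤ (univ.filter fun x => (σ ^ k) x ≠ (τ ^ k) x).card +
            ((univ.filter fun x => σ x ≠ τ x).image fun y => (σ ^ k)⁻¹ y).card :=
          card_union_le _ _
      _ ≤ k * (univ.filter fun x => σ x ≠ τ x).card +
            (univ.filter fun x => σ x ≠ τ x).card := by
          rw [Finset.card_image_of_injective _ ((σ ^ k)⁻¹ : Equiv.Perm (Fin n)).injective]
          exact Nat.add_le_add_right ih _
      _ = (k + 1) * (univ.filter fun x => σ x ≠ τ x).card := by ring

private lemma fix_card_diff_le (n : ℕ) (α β : Equiv.Perm (Fin n)) :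
    |((univ.filter fun x => α x = x).card : ℝ) - ((univ.filter fun x => β x = x).card : ℝ)|
      ≤ ((univ.filter fun x => α x ≠ β x).card : ℝ) := by
  have h1 : (univ.filter fun x => α x = x) ⊆
      (univ.filter fun x => β x = x) ∪ (univ.filter fun x => α x ≠ β x) := by
    intro x hx
    simp only [mem_filter, mem_univ, true_and, mem_union] at hx ⊢
    rcases eq_or_ne (α x) (β x) with h | h
    · left; rw [← h]; exact hx
    · right; exact h
  have h2 : (univ.filter fun x => β x = x) ⊆
      (univ.filter fun x => α x = x) ∪ (univ.filter fun x => α x ≠ β x) := by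
    intro x hx
    simp only [mem_filter, mem_univ, true_and, mem_union] at hx ⊢
    rcases eq_or_ne (α x) (β x) with h | h
    · left; rw [h]; exact hx
    · right; exact h
  have c1 : (univ.filter fun x => α x = x).card ≤
      (univ.filter fun x => β x = x).card + (univ.filter fun x => α x ≠ β x).card :=
    (card_le_card h1).trans (card_union_le _ _)
  have c2 : (univ.filter fun x => β x = x).card ≤
      (univ.filter fun x => α x = x).card + (univ.filter fun x => α x ≠ β x).card :=
    (card_le_card h2).trans (card_union_le _ _)
  have c1' : ((univ.filter fun x => α x = x).card : ℝ) ≤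
      ((univ.filter fun x => β x = x).card : ℝ) + ((univ.filter fun x => α x ≠ β x).card : ℝ) := by
    exact_mod_cast c1
  have c2' : ((univ.filter fun x => β x = x).card : ℝ) ≤
      ((univ.filter fun x => α x = x).card : ℝ) + ((univ.filter fun x => α x ≠ β x).card : ℝ) := by
    exact_mod_cast c2
  rw [abs_sub_le_iff]
  constructor <;> linarith

theorem fix_count_pow_diff_le (n : ℕ) (σ τ : Equiv.Perm (Fin n)) (k : ℕ) (hk : 0 < k) :
    |((univ.filter fun x => (σ ^ k) x = x).card : ℝ) -
        ((univ.filter fun x => (τ ^ k) x = x).card : ℝ)| / n ≤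
      k * (((univ.filter fun x => σ x ≠ τ x).card : ℝ) / n) := by
  rcases Nat.eq_zero_or_pos n with rfl | hn
  · simp
  rw [mul_div_assoc']
  have hnum : |((univ.filter fun x => (σ ^ k) x = x).card : ℝ) -
        ((univ.filter fun x => (τ ^ k) x = x).card : ℝ)|
      ≤ (k : ℝ) * ((univ.filter fun x => σ x ≠ τ x).card : ℝ) := by
    calc |((univ.filter fun x => (σ ^ k) x = x).card : ℝ) -
          ((univ.filter fun x => (τ ^ k) x = x).card : ℝ)|
        ≤ ((univ.filter fun x => (σ ^ k) x ≠ (τ ^ k) x).card : ℝ) :=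
          fix_card_diff_le n (σ ^ k) (τ ^ k)
      _ ≤ (k : ℝ) * ((univ.filter fun x => σ x ≠ τ x).card : ℝ) := by
          exact_mod_cast diff_pow_card_le n σ τ k
  gcongr
end

section
/- Let V be a finite-dimensional vector space over a field k, g ∈ GL(V), and suppose the minimal polynomial of g has degree d. Then for any subspace U ≤ V there exists a g-invariant subspace W ≤ U with codim(W) ≤ d · codim(U). -/
open Module Polynomial Finset

-- codim subadditivity for intersections
lemma codim_inf_le (K : Type*) [Field K] (V : Type*) [AddCommGroup V]
    [Module K V] [FiniteDimensional K V] (A B : Submodule K V) :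
    finrank K V - finrank K (A ⊓ B : Submodule K V) ≤
      (finrank K V - finrank K A) + (finrank K V - finrank K B) := by
  have h := Submodule.finrank_sup_add_finrank_inf_eq A B
  have h1 : finrank K A ≤ finrank K V := Submodule.finrank_le A
  have h2 : finrank K B ≤ finrank K V := Submodule.finrank_le B
  have h3 : finrank K ((A ⊔ B : Submodule K V)) ≤ finrank K V := Submodule.finrank_le _
  have h4 : finrank K ((A ⊓ B : Submodule K V)) ≤ finrank K V := Submodule.finrank_le _
  omega

theorem exists_invariant_subspace (K : Type*) [Field K] (V : Type*) [AddCommGroup V]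
    [Module K V] [FiniteDimensional K V] (g : (V →ₗ[K] V)ˣ) (d : ℕ)
    (hd : (minpoly K (g : V →ₗ[K] V)).natDegree = d) (U : Submodule K V) :
    ∃ W : Submodule K V, W ≤ U ∧ W.map (g : V →ₗ[K] V) = W ∧
      finrank K V - finrank K W ≤ d * (finrank K V - finrank K U) := by
  classical
  set f : V →ₗ[K] V := (g : V →ₗ[K] V) with hfdef
  have hfu : IsUnit f := g.isUnit
  have hfbij : Function.Bijective f := Module.End.isUnit_iff f |>.mp hfu
  have hint : IsIntegral K f := Algebra.IsIntegral.isIntegral f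
  set p := minpoly K f with hp
  rcases Nat.eq_zero_or_pos d with hd0 | hdpos
  · -- degenerate case: minpoly has degree 0, so V is trivial
    subst hd0
    have hp1 : p = 1 := (minpoly.monic hint).natDegree_eq_zero.mp hd
    have h10 : (1 : V →ₗ[K] V) = 0 := by
      have := minpoly.aeval K f
      rw [← hp, hp1] at this
      simpa using this
    have hsub : ∀ v : V, v = 0 := by
      intro v
      have : (1 : V →ₗ[K] V) v = (0 : V →ₗ[K] V) v := by rw [h10]
      simpa using this
    have hVS : Subsingleton V := ⟨fun a b => by rw [hsub a, hsub b]⟩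
    refine ⟨⊥, bot_le, by simp, by simp [Module.finrank_zero_of_subsingleton]⟩
  -- main case
  refine ⟨⨅ i ∈ range d, U.comap (f ^ i), ?_, ?_, ?_⟩
  · intro x hx
    simp only [Submodule.mem_iInf, Submodule.mem_comap] at hx
    simpa using hx 0 (mem_range.mpr hdpos)
  · -- invariance
    have hker : LinearMap.ker f = ⊥ := LinearMap.ker_eq_bot.mpr hfbij.injective
    have hc0 : p.coeff 0 ≠ 0 := by
      have := ((LinearMap.not_hasEigenvalue_zero_tfae f).out 1 4).mpr hker
      simpa [IsRoot.def, ← coeff_zero_eq_eval_zero] using this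
    have hsum : ∀ x : V, ∑ i ∈ range (d + 1), p.coeff i • (f ^ i) x = 0 := by
      intro x
      have h0 : Polynomial.aeval f p = 0 := minpoly.aeval K f
      rw [aeval_eq_sum_range, hd] at h0
      calc ∑ i ∈ range (d + 1), p.coeff i • (f ^ i) x
          = (∑ i ∈ range (d + 1), p.coeff i • f ^ i) x := by
            simp [LinearMap.sum_apply]
        _ = 0 := by rw [h0]; rfl
    have hcomap : Submodule.comap f (⨅ i ∈ range d, U.comap (f ^ i))
        = ⨅ i ∈ range d, U.comap (f ^ i) := by
      apply le_antisymm
      · -- x with f^(i+1) x ∈ U for all i < d ⟹ f^i x ∈ U for all i < d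
        intro x hx
        simp only [Submodule.mem_comap, Submodule.mem_iInf] at hx ⊢
        have hx' : ∀ i ∈ range d, (f ^ (i + 1)) x ∈ U := by
          intro i hi
          have := hx i hi
          rwa [← Module.End.mul_apply, ← pow_succ] at this
        intro i hi
        rcases Nat.eq_zero_or_pos i with rfl | hipos
        · -- show x ∈ U using the minimal polynomial
          have key : p.coeff 0 • x = -∑ i ∈ range d, p.coeff (i + 1) • (f ^ (i + 1)) x := by
            have := hsum x
            rw [Finset.sum_range_succ'] at this
            simp only [pow_zero, Module.End.one_apply] at this
            rw [add_comm] at this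
            exact eq_neg_of_add_eq_zero_left this
          have hmem : p.coeff 0 • x ∈ U := by
            rw [key]
            exact U.neg_mem (U.sum_mem fun i hi => U.smul_mem _ (hx' i hi))
          have hmem2 := U.smul_mem (p.coeff 0)⁻¹ hmem
          rw [smul_smul, inv_mul_cancel₀ hc0, one_smul] at hmem2
          simpa using hmem2
        · have hi' := mem_range.mp hi
          have : i - 1 ∈ range d := mem_range.mpr (by omega)
          have := hx' (i - 1) this
          simpa [Nat.sub_add_cancel hipos] using this
      · -- x with f^i x ∈ U for all i < d ⟹ f^(i+1) x ∈ U for all i < d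
        intro x hx
        simp only [Submodule.mem_comap, Submodule.mem_iInf] at hx ⊢
        intro i hi
        rw [← Module.End.mul_apply, ← pow_succ]
        rcases Nat.lt_or_ge (i + 1) d with h | h
        · exact hx (i + 1) (mem_range.mpr h)
        · have hi' := mem_range.mp hi
          have hid : i + 1 = d := by omega
          rw [hid]
          -- f^d x ∈ U from minpoly
          have key : (1 : K) • (f ^ d) x = -∑ j ∈ range d, p.coeff j • (f ^ j) x := by
            have := hsum x
            rw [Finset.sum_range_succ] at this
            have hlead : p.coeff d = 1 := by
              rw [← hd]; exact (minpoly.monic hint).coeff_natDegree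
            rw [hlead, add_comm] at this
            exact eq_neg_of_add_eq_zero_left this
          have : (f ^ d) x = -∑ j ∈ range d, p.coeff j • (f ^ j) x := by simpa using key
          rw [this]
          exact U.neg_mem (U.sum_mem fun j hj => U.smul_mem _ (hx j hj))
    calc Submodule.map f (⨅ i ∈ range d, U.comap (f ^ i))
        = Submodule.map f (Submodule.comap f (⨅ i ∈ range d, U.comap (f ^ i))) := by
          rw [hcomap]
      _ = ⨅ i ∈ range d, U.comap (f ^ i) := by
          rw [Submodule.map_comap_eq, LinearMap.range_eq_top.mpr hfbij.surjective, top_inf_eq]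
  · -- dimension bound
    have hrank : ∀ i : ℕ, finrank K (U.comap (f ^ i)) = finrank K U := by
      intro i
      have hbij : Function.Bijective (f ^ i) :=
        Module.End.isUnit_iff (f ^ i) |>.mp (hfu.pow i)
      let e : V ≃ₗ[K] V := LinearEquiv.ofBijective (f ^ i) hbij
      have : U.comap (f ^ i) = Submodule.map (e.symm : V →ₗ[K] V) U := by
        rw [Submodule.map_equiv_eq_comap_symm, LinearEquiv.symm_symm]
        rfl
      rw [this, LinearEquiv.finrank_map_eq]
    -- induction
    have main : ∀ n : ℕ, finrank K V
          - finrank K ((⨅ i ∈ range n, U.comap (f ^ i) : Submodule K V))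
        ≤ n * (finrank K V - finrank K U) := by
      intro n
      induction n with
      | zero =>
        have htop : (⨅ i ∈ range 0, U.comap (f ^ i) : Submodule K V) = ⊤ := by
          apply eq_top_iff.mpr
          intro x _
          simp only [Submodule.mem_iInf]
          intro i hi
          simp at hi
        rw [htop, finrank_top]
        omega
      | succ n ih =>
        rw [Finset.range_add_one]
        have hins : (⨅ i ∈ insert n (range n), U.comap (f ^ i))
            = U.comap (f ^ n) ⊓ ⨅ i ∈ range n, U.comap (f ^ i) := by
          exact Finset.iInf_insert _ _ _
        rw [hins]
        have := codim_inf_le K V (U.comap (f ^ n)) (⨅ i ∈ range n, U.comap (f ^ i))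
        rw [hrank n] at this
        calc finrank K V - finrank K ((U.comap (f ^ n) ⊓ ⨅ i ∈ range n, U.comap (f ^ i) : Submodule K V))
            ≤ (finrank K V - finrank K U)
              + (finrank K V - finrank K ((⨅ i ∈ range n, U.comap (f ^ i) : Submodule K V))) := this
          _ ≤ (finrank K V - finrank K U) + n * (finrank K V - finrank K U) := by omega
          _ = (n + 1) * (finrank K V - finrank K U) := by ring
    exact main d
end

section
/- For σ ∈ S_n there exists a subset S ⊆ {1,…,n} with S ∩ S.σ = ∅ and |S| ≥ |supp(σ)|/3, where supp(σ) = {x : x.σ ≠ x}. -/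
open Finset

theorem aux_displaced {n : ℕ} (σ : Equiv.Perm (Fin n)) (T : Finset (Fin n)) :
    ∃ S ⊆ T, Disjoint S (S.image σ) ∧ (T.filter fun x => σ x ≠ x).card ≤ 3 * S.card := by
  induction T using Finset.strongInductionOn with
  | _ T ih =>
    by_cases h : ∀ x ∈ T, σ x = x
    · refine ⟨∅, empty_subset T, by simp, ?_⟩
      have : T.filter (fun x => σ x ≠ x) = ∅ :=
        Finset.filter_eq_empty_iff.2 (fun x hx => by simp [h x hx])
      simp [this]
    · push_neg at h
      obtain ⟨x, hxT, hx⟩ := h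
      set T' := T \ {x, σ x, σ⁻¹ x} with hT'
      have hsub : T' ⊆ T := sdiff_subset
      have hss : T' ⊂ T := by
        refine Finset.ssubset_iff_of_subset hsub |>.2 ⟨x, hxT, ?_⟩
        simp [hT']
      obtain ⟨S', hS'T, hdisj, hcard⟩ := ih T' hss
      have hxS' : x ∉ S' := fun hmem => by simpa [hT'] using hS'T hmem
      have hσxS' : σ x ∉ S' := fun hmem => by simpa [hT'] using hS'T hmem
      have hσixS' : σ⁻¹ x ∉ S' := fun hmem => by simpa [hT'] using hS'T hmem
      refine ⟨insert x S', insert_subset hxT (hS'T.trans hsub), ?_, ?_⟩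
      · rw [Finset.disjoint_left]
        intro a ha hmem
        rw [Finset.mem_image] at hmem
        obtain ⟨b, hb, hba⟩ := hmem
        rcases Finset.mem_insert.1 ha with rfl | haS'
        · rcases Finset.mem_insert.1 hb with rfl | hbS'
          · exact hx hba
          · apply hσixS'
            have : b = σ⁻¹ a := by rw [← hba]; simp
            rwa [← this]
        · rcases Finset.mem_insert.1 hb with rfl | hbS'
          · rw [hba] at hσxS'; exact hσxS' haS'
          · exact Finset.disjoint_left.1 hdisj haS'
              (Finset.mem_image.2 ⟨b, hbS', hba⟩)
      · have h1 : T ⊆ T' ∪ {x, σ x, σ⁻¹ x} := by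
          intro a ha
          by_cases h2 : a ∈ ({x, σ x, σ⁻¹ x} : Finset (Fin n))
          · exact Finset.mem_union_right _ h2
          · exact Finset.mem_union_left _ (Finset.mem_sdiff.2 ⟨ha, h2⟩)
        calc (T.filter fun x => σ x ≠ x).card
            ≤ ((T' ∪ {x, σ x, σ⁻¹ x}).filter fun x => σ x ≠ x).card :=
              Finset.card_le_card (Finset.filter_subset_filter _ h1)
          _ ≤ (T'.filter fun x => σ x ≠ x).card + ({x, σ x, σ⁻¹ x} : Finset (Fin n)).card := by
              rw [Finset.filter_union]
              exact (Finset.card_union_le _ _).trans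
                (Nat.add_le_add_left (Finset.card_filter_le _ _) _)
          _ ≤ 3 * S'.card + 3 := by
              refine Nat.add_le_add hcard ?_
              exact (Finset.card_insert_le _ _).trans
                (Nat.succ_le_succ ((Finset.card_insert_le _ _).trans (by simp)))
          _ = 3 * (S'.card + 1) := by ring
          _ = 3 * (insert x S').card := by rw [Finset.card_insert_of_notMem hxS']

theorem exists_displaced_subset (n : ℕ) (σ : Equiv.Perm (Fin n)) :
    ∃ S : Finset (Fin n), Disjoint S (S.image σ) ∧
      (univ.filter fun x => σ x ≠ x).card ≤ 3 * S.card := by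
  obtain ⟨S, -, h1, h2⟩ := aux_displaced σ univ
  exact ⟨S, h1, h2⟩
end

section
/- Let g be an invertible linear map on a finite-dimensional vector space V over a field and suppose V is spanned by g-cyclic subspaces (Frobenius blocks) each of dimension at least 2. Then there exists a subspace W ≤ V with W ∩ W.g = 0 and dim W ≥ dim(V)/3. More precisely, if V = ⊕_b V_b with each V_b a g-cyclic subspace of dimension k_b > 1 with cyclic vector v_b, then W = ⊕_b span{v_b, v_b.g^2, …, v_b.g^{2(⌊k_b/2⌋−1)}} satisfies W ∩ W.g = 0. -/
/-!
Arrange the cyclic bases `v_b, v_b.g, …, v_b.g^(k_b - 1)` of the blocks into one basis of `V`,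
indexed by pairs `(b, j)`. The even-indexed vectors `v_b.g^(2j)` with `2j + 1 < k_b` span `W`,
and `g` sends them to odd-indexed basis vectors, so `W` and `W.g` lie in the spans of two
disjoint parts of a basis. Counting, `dim W = ∑ ⌊k_b/2⌋ ≥ ∑ k_b / 3` because every `k_b ≥ 2`.
-/

open Module Submodule Set

section

variable {R M ι : Type*} [Ring R] [AddCommGroup M] [Module R M]

theorem iSupIndep.linearIndependent_sigma {B : ι → Submodule R M} (hB : iSupIndep B)
    {κ : ι → Type*} {u : ∀ i, κ i → M} (hu : ∀ i, LinearIndependent R (u i))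
    (hmem : ∀ i j, u i j ∈ B i) :
    LinearIndependent R fun p : Σ i, κ i => u p.1 p.2 := by
  have hspan : ∀ i, span R (range (u i)) ≤ B i := fun i =>
    span_le.mpr (range_subset_iff.mpr (hmem i))
  refine linearIndependent_iUnion_finite hu fun i t _ hit => ?_
  refine (hB i).mono (hspan i) (iSup₂_le fun j hj => (hspan j).trans ?_)
  exact le_iSup₂_of_le j (fun h => hit (h ▸ hj)) le_rfl

theorem finrank_iSup_span_range_eq_sum [StrongRankCondition R] [Fintype ι] {κ : ι → Type*}
    [∀ i, Fintype (κ i)] {u : ∀ i, κ i → M}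
    (hu : LinearIndependent R fun p : Σ i, κ i => u p.1 p.2) :
    finrank R ↥(⨆ i, span R (range (u i))) = ∑ i, Fintype.card (κ i) := by
  have := nontrivial_of_invariantBasisNumber R
  rw [← span_iUnion, ← range_sigma_eq_iUnion_range (fun p : Σ i, κ i => u p.1 p.2),
    finrank_span_eq_card hu, Fintype.card_sigma]

theorem iSup_span_even_inf_map_eq_bot (f : M →ₗ[R] M) (u : ι → ℕ → M)
    (hu : ∀ i n, f (u i n) = u i (n + 1)) (k : ι → ℕ)
    (hli : LinearIndependent R fun p : Σ i, Fin (k i) => u p.1 p.2) :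
    (⨆ i, span R (range fun j : Fin (k i / 2) => u i (2 * j))) ⊓
      (⨆ i, span R (range fun j : Fin (k i / 2) => u i (2 * j))).map f = ⊥ := by
  set W := ⨆ i, span R (range fun j : Fin (k i / 2) => u i (2 * j)) with hWdef
  set w : (Σ i, Fin (k i)) → M := fun p => u p.1 p.2
  have hparity : Disjoint {p : Σ i, Fin (k i) | Even (p.2 : ℕ)} {p | Odd (p.2 : ℕ)} :=
    disjoint_left.mpr fun _ he ho => Nat.not_odd_iff_even.mpr he ho
  have hW : W ≤ span R (w '' {p | Even (p.2 : ℕ)}) :=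
    iSup_le fun i => span_le.mpr <| range_subset_iff.mpr fun j =>
      subset_span ⟨⟨i, ⟨2 * j, by omega⟩⟩, even_two_mul _, rfl⟩
  have hgW : W.map f ≤ span R (w '' {p | Odd (p.2 : ℕ)}) := by
    rw [hWdef, Submodule.map_iSup]
    refine iSup_le fun i => ?_
    rw [map_span, ← range_comp, span_le, range_subset_iff]
    intro j
    exact subset_span ⟨⟨i, ⟨2 * j + 1, by omega⟩⟩, odd_two_mul_add_one _, (hu i _).symm⟩
  exact disjoint_iff.mp ((hli.disjoint_span_image hparity).mono hW hgW)

end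

theorem exists_disjoint_from_image_subspace_general (F : Type*) [Field F] (V : Type*)
    [AddCommGroup V] [Module F V]
    (g : V ≃ₗ[F] V) (ι : Type*) [Fintype ι] (v : ι → V) (k : ι → ℕ)
    (hk : ∀ i, 2 ≤ k i)
    (B : ι → Submodule F V)
    (hB : ∀ i, B i = Submodule.span F
      (Set.range fun j : Fin (k i) => (g ^ (j : ℕ)) (v i)))
    (hdim : ∀ i, finrank F (B i) = k i)
    (hindep : iSupIndep B)
    (hsup : ⨆ i, B i = ⊤) :
    (∃ W : Submodule F V, W ⊓ W.map (g : V →ₗ[F] V) = ⊥ ∧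
        finrank F V ≤ 3 * finrank F W) ∧
      ((⨆ i, Submodule.span F
          (Set.range fun j : Fin (k i / 2) => (g ^ (2 * (j : ℕ))) (v i))) ⊓
        (⨆ i, Submodule.span F
          (Set.range fun j : Fin (k i / 2) => (g ^ (2 * (j : ℕ))) (v i))).map
            (g : V →ₗ[F] V) = ⊥) := by
  have hblock : ∀ i, LinearIndependent F fun j : Fin (k i) => (g ^ (j : ℕ)) (v i) := fun i => by
    rw [linearIndependent_iff_card_eq_finrank_span, Set.finrank, ← hB, hdim, Fintype.card_fin]
  have hli : LinearIndependent F fun p : Σ i, Fin (k i) => (g ^ (p.2 : ℕ)) (v p.1) :=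
    hindep.linearIndependent_sigma hblock fun i j => hB i ▸ subset_span ⟨j, rfl⟩
  have hdisj := iSup_span_even_inf_map_eq_bot (g : V →ₗ[F] V) (fun i n => (g ^ n) (v i))
    (fun i n => by rw [pow_succ', LinearEquiv.mul_apply]; rfl) k hli
  beta_reduce at hdisj
  refine ⟨⟨_, hdisj, ?_⟩, hdisj⟩
  have hV : finrank F V = ∑ i, k i := by
    rw [← finrank_top, ← hsup, iSup_congr hB,
      finrank_iSup_span_range_eq_sum (u := fun i (j : Fin (k i)) => (g ^ (j : ℕ)) (v i)) hli]
    simp only [Fintype.card_fin]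
  have hdouble : Function.Injective fun p : Σ i, Fin (k i / 2) =>
      (⟨p.1, ⟨2 * p.2, by omega⟩⟩ : Σ i, Fin (k i)) := by
    rintro ⟨i, j⟩ ⟨i', j'⟩ h
    obtain ⟨rfl, h⟩ := Sigma.mk.inj_iff.mp h
    have : (j : ℕ) = j' := by simpa using congrArg Fin.val (eq_of_heq h)
    rw [Fin.ext this]
  have heven := hli.comp _ hdouble
  rw [hV, finrank_iSup_span_range_eq_sum
    (u := fun i (j : Fin (k i / 2)) => (g ^ (2 * (j : ℕ))) (v i)) heven, Finset.mul_sum]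
  exact Finset.sum_le_sum fun i _ => by simp only [Fintype.card_fin]; have := hk i; omega

theorem exists_disjoint_from_image_subspace (F : Type*) [Field F] (V : Type*)
    [AddCommGroup V] [Module F V] [FiniteDimensional F V]
    (g : V ≃ₗ[F] V) (ι : Type*) [Fintype ι] (v : ι → V) (k : ι → ℕ)
    (hk : ∀ i, 2 ≤ k i)
    (B : ι → Submodule F V)
    (hB : ∀ i, B i = Submodule.span F
      (Set.range fun j : Fin (k i) => (g ^ (j : ℕ)) (v i)))
    (hdim : ∀ i, finrank F (B i) = k i)
    (hindep : iSupIndep B)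
    (hsup : ⨆ i, B i = ⊤) :
    (∃ W : Submodule F V, W ⊓ W.map (g : V →ₗ[F] V) = ⊥ ∧
        finrank F V ≤ 3 * finrank F W) ∧
      ((⨆ i, Submodule.span F
          (Set.range fun j : Fin (k i / 2) => (g ^ (2 * (j : ℕ))) (v i))) ⊓
        (⨆ i, Submodule.span F
          (Set.range fun j : Fin (k i / 2) => (g ^ (2 * (j : ℕ))) (v i))).map
            (g : V →ₗ[F] V) = ⊥) :=
  exists_disjoint_from_image_subspace_general F V g ι v k hk B hB hdim hindep hsup
end
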